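/- arXiv:0908.1909 — 6 statements merged into one kernel-verified Lean document; each statement's English description precedes it below -/
import Mathlib

section
/- For the density p(x) = b_k exp(-a_k x^{2k}) on ℝ with CDF P, the lower tail bound holds for all x > 0: b_k · (x / (2k a_k x^{2k} + 2k - 1)) · exp(-a_k x^{2k}) ≤ 1 - P(x). -/
/-!
Write `φ(t) = exp (-a t^{2k})` and `D(t) = 2k a t^{2k} + 2k - 1 ≥ 1`. The candidate bound
`g = t φ / D` tends to `0` at `+∞`, and a direct computation gives
`g' = -φ (1 - 2k(2k-1) / D²) ≥ -φ`. Integrating over `(x, ∞)` yields `g(x) ≤ ∫_x^∞ φ`, and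
`1 - P(x) = b ∫_x^∞ φ` because `b` normalises `φ`.
-/

open MeasureTheory Set Filter Topology Real

lemma sq_sub_one_le_pow_two_mul {k : ℕ} (hk : 1 ≤ k) (t : ℝ) : t ^ 2 - 1 ≤ t ^ (2 * k) := by
  rw [pow_mul]
  rcases le_total 1 (t ^ 2) with h | h
  · linarith [le_self_pow₀ h (by omega : k ≠ 0)]
  · linarith [pow_nonneg (sq_nonneg t) k]

lemma integrable_exp_neg_mul_pow_two_mul {k : ℕ} (hk : 1 ≤ k) {a : ℝ} (ha : 0 < a) :
    Integrable fun t : ℝ ↦ exp (-a * t ^ (2 * k)) := by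
  refine ((integrable_exp_neg_mul_sq ha).const_mul (exp a)).mono' (by fun_prop)
    (Eventually.of_forall fun t ↦ ?_)
  rw [norm_of_nonneg (exp_pos _).le, ← exp_add, exp_le_exp]
  nlinarith [sq_sub_one_le_pow_two_mul hk t]

lemma tendsto_exp_neg_mul_pow_atTop {n : ℕ} (hn : n ≠ 0) {a : ℝ} (ha : 0 < a) :
    Tendsto (fun t : ℝ ↦ exp (-a * t ^ n)) atTop (𝓝 0) := by
  simp_rw [tendsto_exp_comp_nhds_zero, neg_mul]
  exact tendsto_neg_atTop_atBot.comp ((tendsto_pow_atTop hn).const_mul_atTop ha)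

lemma one_sub_setIntegral_Iic_eq_mul_setIntegral_Ioi {f : ℝ → ℝ} (hf : Integrable f)
    (hf₀ : ∫ t, f t ≠ 0) (x : ℝ) :
    1 - ∫ t in Iic x, (∫ s, f s)⁻¹ * f t = (∫ s, f s)⁻¹ * ∫ t in Ioi x, f t := by
  have hsplit := intervalIntegral.integral_Iic_add_Ioi (b := x) hf.integrableOn hf.integrableOn
  rw [integral_const_mul]
  field_simp
  linarith

noncomputable def tailLowerBound (k : ℕ) (a x : ℝ) : ℝ :=
  x / (2 * k * a * x ^ (2 * k) + 2 * k - 1) * exp (-a * x ^ (2 * k))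

section tailLowerBound

variable {k : ℕ} {a : ℝ}

lemma one_le_tailLowerBound_denom (hk : 1 ≤ k) (ha : 0 < a) (t : ℝ) :
    1 ≤ 2 * k * a * t ^ (2 * k) + 2 * k - 1 := by
  have : (1 : ℝ) ≤ k := by exact_mod_cast hk
  have := (even_two_mul k).pow_nonneg t
  have : 0 ≤ 2 * k * a * t ^ (2 * k) := by positivity
  linarith

lemma hasDerivAt_tailLowerBound (hk : 1 ≤ k) (ha : 0 < a) (t : ℝ) :
    HasDerivAt (tailLowerBound k a)
      (exp (-a * t ^ (2 * k)) *
        (2 * k * (2 * k - 1) / (2 * k * a * t ^ (2 * k) + 2 * k - 1) ^ 2 - 1)) t := by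
  have hD := (one_le_tailLowerBound_denom hk ha t).trans_lt' one_pos |>.ne'
  have hpow := hasDerivAt_pow (2 * k) t
  have := ((hasDerivAt_id t).div (((hpow.const_mul (2 * k * a)).add_const (2 * k : ℝ)).sub_const 1)
    hD).mul (hpow.const_mul (-a)).exp
  refine (this : HasDerivAt (tailLowerBound k a) _ t).congr_deriv ?_
  have hsucc : t ^ (2 * k) = t ^ (2 * k - 1) * t := by rw [← pow_succ]; congr; omega
  simp only [Pi.div_apply, id, hsucc] at hD ⊢
  generalize t ^ (2 * k - 1) = u at hD ⊢
  push_cast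
  -- with the denominator kept atomic, `field_simp` can clear it
  set D := 2 * (k : ℝ) * a * (u * t) + 2 * k - 1 with hDdef
  field_simp
  rw [hDdef]
  ring

lemma tendsto_tailLowerBound_atTop (hk : 1 ≤ k) (ha : 0 < a) :
    Tendsto (tailLowerBound k a) atTop (𝓝 0) := by
  have hφ := (tendsto_exp_neg_mul_pow_atTop (by omega : 2 * k ≠ 0) ha).div_const (2 * k * a)
  rw [zero_div] at hφ
  refine tendsto_of_tendsto_of_tendsto_of_le_of_le' tendsto_const_nhds hφ ?_ ?_
  all_goals filter_upwards [eventually_ge_atTop 1] with t ht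
  · have := one_le_tailLowerBound_denom hk ha t
    unfold tailLowerBound
    positivity
  · have hD := one_le_tailLowerBound_denom hk ha t
    have hk' : (1 : ℝ) ≤ k := by exact_mod_cast hk
    have hpow : t ≤ t ^ (2 * k) := le_self_pow₀ ht (by omega)
    have hratio : t / (2 * k * a * t ^ (2 * k) + 2 * k - 1) ≤ 1 / (2 * k * a) := by
      rw [div_le_div_iff₀ (by linarith) (by positivity)]
      nlinarith [mul_le_mul_of_nonneg_left hpow (by positivity : (0 : ℝ) ≤ 2 * k * a)]
    rw [div_eq_mul_one_div _ (2 * k * a), mul_comm _ (1 / _)]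
    exact mul_le_mul_of_nonneg_right hratio (exp_pos _).le

theorem tailLowerBound_le_integral_Ioi (hk : 1 ≤ k) (ha : 0 < a) (x : ℝ) :
    tailLowerBound k a x ≤ ∫ t in Ioi x, exp (-a * t ^ (2 * k)) := by
  set D : ℝ → ℝ := fun t ↦ 2 * k * a * t ^ (2 * k) + 2 * k - 1
  have hc : (0 : ℝ) ≤ 2 * k * (2 * k - 1) := by
    have : (1 : ℝ) ≤ k := by exact_mod_cast hk
    nlinarith
  have hweight (t : ℝ) :
      0 ≤ 2 * k * (2 * k - 1) / D t ^ 2 ∧ 2 * k * (2 * k - 1) / D t ^ 2 ≤ 2 * k * (2 * k - 1) := by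
    have := one_le_tailLowerBound_denom hk ha t
    exact ⟨by positivity, div_le_self hc (by nlinarith)⟩
  have hint : Integrable fun t ↦ exp (-a * t ^ (2 * k)) * (2 * k * (2 * k - 1) / D t ^ 2 - 1) := by
    refine (integrable_exp_neg_mul_pow_two_mul hk ha).mul_bdd (c := 2 * k * (2 * k - 1) + 1)
      (by fun_prop : Measurable _).aestronglyMeasurable (Eventually.of_forall fun t ↦ ?_)
    rw [norm_eq_abs, abs_le]
    constructor <;> linarith [hweight t]
  have hftc := integral_Ioi_of_hasDerivAt_of_tendsto' (a := x)
    (fun t _ ↦ hasDerivAt_tailLowerBound hk ha t) hint.integrableOn (tendsto_tailLowerBound_atTop hk ha)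
  calc tailLowerBound k a x
      = ∫ t in Ioi x, -(exp (-a * t ^ (2 * k)) * (2 * k * (2 * k - 1) / D t ^ 2 - 1)) := by
        rw [integral_neg, hftc]; ring
    _ ≤ ∫ t in Ioi x, exp (-a * t ^ (2 * k)) := by
        refine setIntegral_mono hint.neg.integrableOn
          (integrable_exp_neg_mul_pow_two_mul hk ha).integrableOn fun t ↦ ?_
        nlinarith [exp_pos (-a * t ^ (2 * k)), hweight t]

end tailLowerBound

theorem stmt4_general (k : ℕ) (hk : 1 ≤ k) (a b : ℝ) (ha : 0 < a)
    (hb : b = (∫ t : ℝ, Real.exp (-a * t ^ (2 * k)))⁻¹)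
    (x : ℝ) :
    b * (x / (2 * k * a * x ^ (2 * k) + 2 * k - 1)) * Real.exp (-a * x ^ (2 * k))
      ≤ 1 - ∫ t in Set.Iic x, b * Real.exp (-a * t ^ (2 * k)) := by
  have hint := integrable_exp_neg_mul_pow_two_mul hk ha
  have hpos : 0 < ∫ t, exp (-a * t ^ (2 * k)) := integral_exp_pos hint
  rw [hb, one_sub_setIntegral_Iic_eq_mul_setIntegral_Ioi hint hpos.ne', mul_assoc]
  exact mul_le_mul_of_nonneg_left (tailLowerBound_le_integral_Ioi hk ha x) (inv_pos.2 hpos).le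

/-- Lower tail bound for the density `p(x) = b exp(-a x^{2k})`:
for `x > 0`, `b · x/(2k a x^{2k} + 2k - 1) · exp(-a x^{2k}) ≤ 1 - P(x)`. -/
theorem stmt4 (k : ℕ) (hk : 1 ≤ k) (a b : ℝ) (ha : 0 < a)
    (hb : b = (∫ t : ℝ, Real.exp (-a * t ^ (2 * k)))⁻¹)
    (x : ℝ) (hx : 0 < x) :
    b * (x / (2 * k * a * x ^ (2 * k) + 2 * k - 1)) * Real.exp (-a * x ^ (2 * k))
      ≤ 1 - ∫ t in Set.Iic x, b * Real.exp (-a * t ^ (2 * k)) :=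
  stmt4_general k hk a b ha hb x
end

section
/- For the density p(x) = b_k exp(-a_k x^{2k}) with CDF P, the function x ↦ exp(a_k x^{2k}) ∫_x^∞ exp(-a_k t^{2k}) dt is strictly decreasing on (0,∞), and consequently for all x > 0: 1 - P(x) ≤ (1/2) exp(-a_k x^{2k}). -/
/-!
Substituting `t = s + x` turns the Mills ratio `R x = exp (a x ^ n) ∫_x^∞ exp (-a t ^ n) dt`
into `∫_0^∞ exp (-a ((s + x) ^ n - x ^ n)) ds`; for `n ≥ 2` the exponent `(s + x) ^ n - x ^ n`
grows strictly with `x ≥ 0`, so `R` is strictly decreasing on `[0, ∞)`. Hence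
`1 - P x = b exp (-a x ^ n) R x ≤ b exp (-a x ^ n) R 0`, and by evenness `b R 0 = 1 / 2`.
-/

open MeasureTheory Set Real

section

variable {E : Type*} [NormedAddCommGroup E]

lemma integrableOn_Ioi_iff_integrableOn_Ioi_zero_comp_add {g : ℝ → E} {x : ℝ} :
    IntegrableOn g (Ioi x) ↔ IntegrableOn (fun s => g (s + x)) (Ioi 0) := by
  rw [← (measurePreserving_add_right volume x).integrableOn_comp_preimage
    (measurableEmbedding_addRight x), preimage_add_const_Ioi, sub_self]
  rfl

lemma MeasureTheory.Integrable.of_integrableOn_Ioi_of_even {f : ℝ → E}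
    (hf : ∀ t, f (-t) = f t) (hi : IntegrableOn f (Ioi 0)) : Integrable f := by
  rw [← integrableOn_univ, ← Iic_union_Ioi (a := (0 : ℝ))]
  refine IntegrableOn.union ?_ hi
  rw [← (Measure.measurePreserving_neg volume).integrableOn_comp_preimage
    (Homeomorph.neg ℝ).measurableEmbedding]
  simp only [Function.comp_def, hf, neg_preimage, neg_Iic, neg_zero]
  exact (integrableOn_Ici_iff_integrableOn_Ioi).2 hi

lemma setIntegral_Ioi_eq_setIntegral_Ioi_zero_comp_add [NormedSpace ℝ E] (g : ℝ → E)
    (x : ℝ) :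
    ∫ t in Ioi x, g t = ∫ s in Ioi 0, g (s + x) := by
  rw [← (measurePreserving_add_right volume x).setIntegral_preimage_emb
    (measurableEmbedding_addRight x) g, preimage_add_const_Ioi, sub_self]

end

lemma setIntegral_lt_setIntegral {X : Type*} [MeasurableSpace X] {μ : Measure X} {s : Set X}
    {f g : X → ℝ} (hs : MeasurableSet s) (hμs : μ s ≠ 0) (hf : IntegrableOn f s μ)
    (hg : IntegrableOn g s μ) (hfg : ∀ x ∈ s, f x < g x) :
    ∫ x in s, f x ∂μ < ∫ x in s, g x ∂μ := by
  rw [← sub_pos, ← integral_sub hg hf]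
  refine (setIntegral_pos_iff_support_of_nonneg_ae ?_ (hg.sub hf)).2 ?_
  · filter_upwards [ae_restrict_mem hs] with x hx using (sub_pos.2 (hfg x hx)).le
  · have : s ⊆ Function.support (g - f) := fun x hx => (sub_pos.2 (hfg x hx)).ne'
    rw [inter_eq_right.2 this]
    exact pos_iff_ne_zero.2 hμs

lemma one_sub_setIntegral_Iic_inv_integral_mul {f : ℝ → ℝ} (hf : Integrable f)
    (hf₀ : ∫ t, f t ≠ 0) (x : ℝ) :
    1 - ∫ t in Iic x, (∫ t, f t)⁻¹ * f t = (∫ t, f t)⁻¹ * ∫ t in Ioi x, f t := by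
  have hsplit := intervalIntegral.integral_Iic_add_Ioi (b := x) hf.integrableOn hf.integrableOn
  rw [integral_const_mul]
  field_simp
  linarith

lemma strictMonoOn_add_pow_sub_pow {n : ℕ} (hn : 2 ≤ n) {s : ℝ} (hs : 0 < s) :
    StrictMonoOn (fun u : ℝ => (s + u) ^ n - u ^ n) (Ici 0) := by
  have hderiv (u : ℝ) : HasDerivAt (fun u : ℝ => (s + u) ^ n - u ^ n)
      (n * (s + u) ^ (n - 1) - n * u ^ (n - 1)) u := by
    simpa using (((hasDerivAt_id u).const_add s).fun_pow n).fun_sub (hasDerivAt_pow n u)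
  refine strictMonoOn_of_hasDerivWithinAt_pos (convex_Ici 0) (by fun_prop)
    (fun u _ => (hderiv u).hasDerivWithinAt) fun u hu => ?_
  rw [interior_Ici, mem_Ioi] at hu
  have : u ^ (n - 1) < (s + u) ^ (n - 1) := pow_lt_pow_left₀ (by linarith) hu.le (by omega)
  have : (0 : ℝ) < n := by positivity
  nlinarith

section

variable {a : ℝ} {n : ℕ}

lemma integrableOn_Ioi_exp_neg_mul_pow (ha : 0 < a) (hn : n ≠ 0) :
    IntegrableOn (fun t : ℝ => exp (-a * t ^ n)) (Ioi 0) := by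
  refine (integrableOn_rpow_mul_exp_neg_mul_rpow (s := 0) (p := n) (by norm_num)
    (by positivity) ha).congr_fun (fun t _ => ?_) measurableSet_Ioi
  simp

lemma integrable_exp_neg_mul_pow (ha : 0 < a) (hn : Even n) (hn₀ : n ≠ 0) :
    Integrable (fun t : ℝ => exp (-a * t ^ n)) :=
  .of_integrableOn_Ioi_of_even (fun t => by simp [hn.neg_pow])
    (integrableOn_Ioi_exp_neg_mul_pow ha hn₀)

lemma setIntegral_Ioi_zero_exp_neg_mul_pow (hn : Even n) :
    ∫ t in Ioi 0, exp (-a * t ^ n) = (∫ t, exp (-a * t ^ n)) / 2 := by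
  have := integral_comp_abs (f := fun t => exp (-a * t ^ n))
  simp only [hn.pow_abs] at this
  linarith

/-- `(1 - P x) / p x` for the density `p` proportional to `exp (-a t ^ n)`: its Mills ratio. -/
noncomputable def millsRatio (a : ℝ) (n : ℕ) (x : ℝ) : ℝ :=
  exp (a * x ^ n) * ∫ t in Ioi x, exp (-a * t ^ n)

lemma millsRatio_eq_setIntegral_Ioi_zero (x : ℝ) :
    millsRatio a n x = ∫ s in Ioi 0, exp (-a * ((s + x) ^ n - x ^ n)) := by
  rw [millsRatio, setIntegral_Ioi_eq_setIntegral_Ioi_zero_comp_add, ← integral_const_mul]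
  congr 1 with s
  rw [← exp_add]
  ring_nf

lemma setIntegral_Ioi_exp_neg_mul_pow_eq (x : ℝ) :
    ∫ t in Ioi x, exp (-a * t ^ n) = exp (-a * x ^ n) * millsRatio a n x := by
  rw [millsRatio, ← mul_assoc, ← exp_add, neg_mul, neg_add_cancel, exp_zero, one_mul]

lemma millsRatio_zero (hn : Even n) (hn₀ : n ≠ 0) :
    millsRatio a n 0 = (∫ t, exp (-a * t ^ n)) / 2 := by
  rw [millsRatio, zero_pow hn₀, mul_zero, exp_zero, one_mul,
    setIntegral_Ioi_zero_exp_neg_mul_pow hn]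

lemma integrableOn_Ioi_zero_exp_neg_mul_add_pow_sub_pow (ha : 0 < a) (hn : n ≠ 0) {x : ℝ}
    (hx : 0 ≤ x) : IntegrableOn (fun s => exp (-a * ((s + x) ^ n - x ^ n))) (Ioi 0) := by
  have h := (integrableOn_Ioi_exp_neg_mul_pow ha hn).mono_set (Ioi_subset_Ioi hx)
  rw [integrableOn_Ioi_iff_integrableOn_Ioi_zero_comp_add] at h
  refine IntegrableOn.congr_fun (h.const_mul (exp (a * x ^ n))) (fun s _ => ?_) measurableSet_Ioi
  rw [← exp_add]
  ring_nf

lemma strictAntiOn_millsRatio (ha : 0 < a) (hn : 2 ≤ n) :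
    StrictAntiOn (millsRatio a n) (Ici 0) := by
  intro x hx y hy hxy
  rw [millsRatio_eq_setIntegral_Ioi_zero, millsRatio_eq_setIntegral_Ioi_zero]
  refine setIntegral_lt_setIntegral measurableSet_Ioi (by simp)
    (integrableOn_Ioi_zero_exp_neg_mul_add_pow_sub_pow ha (by omega) hy)
    (integrableOn_Ioi_zero_exp_neg_mul_add_pow_sub_pow ha (by omega) hx) fun s hs => ?_
  exact exp_lt_exp.2 <| mul_lt_mul_of_neg_left (strictMonoOn_add_pow_sub_pow hn hs hx hy hxy)
    (neg_neg_of_pos ha)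

end

/-- The function `x ↦ exp(a x^{2k}) ∫_x^∞ exp(-a t^{2k}) dt` is strictly decreasing on `(0,∞)`,
and consequently `1 - P(x) ≤ (1/2) exp(-a x^{2k})` for `x > 0`. -/
theorem stmt5 (k : ℕ) (hk : 1 ≤ k) (a b : ℝ) (ha : 0 < a)
    (hb : b = (∫ t : ℝ, Real.exp (-a * t ^ (2 * k)))⁻¹) :
    StrictAntiOn
      (fun x : ℝ => Real.exp (a * x ^ (2 * k)) * ∫ t in Set.Ioi x, Real.exp (-a * t ^ (2 * k)))
      (Set.Ioi (0 : ℝ))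
    ∧ ∀ x : ℝ, 0 < x →
        1 - ∫ t in Set.Iic x, b * Real.exp (-a * t ^ (2 * k))
          ≤ (1 / 2) * Real.exp (-a * x ^ (2 * k)) := by
  have hanti := strictAntiOn_millsRatio ha (n := 2 * k) (by omega)
  refine ⟨hanti.mono Ioi_subset_Ici_self, fun x hx => ?_⟩
  subst hb
  have hf := integrable_exp_neg_mul_pow ha (even_two_mul k) (by omega)
  have hR₀ := millsRatio_zero (a := a) (even_two_mul k) (by omega)
  set I := ∫ t, exp (-a * t ^ (2 * k))
  have hI : 0 < I := integral_exp_pos (f := fun t => -a * t ^ (2 * k)) hf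
  calc _ = I⁻¹ * (exp (-a * x ^ (2 * k)) * millsRatio a (2 * k) x) := by
        rw [one_sub_setIntegral_Iic_inv_integral_mul hf hI.ne',
          setIntegral_Ioi_exp_neg_mul_pow_eq]
    _ ≤ I⁻¹ * (exp (-a * x ^ (2 * k)) * millsRatio a (2 * k) 0) := by
        gcongr
        exact (hanti self_mem_Ici hx.le hx).le
    _ = (1 / 2) * exp (-a * x ^ (2 * k)) := by
        rw [hR₀]
        field_simp
end

section
/- Let p be a continuous strictly positive probability density on ℝ with CDF P, let h: ℝ → ℝ be measurable with ∫ |h| p < ∞, and set Ph = ∫ h p. Then the function f(x) = (1/p(x)) ∫_{-∞}^x (h(t) - Ph) p(t) dt satisfies the Stein equation f'(x) + (p'(x)/p(x)) f(x) = h(x) - Ph at every point x where p is differentiable and h is continuous. -/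
open MeasureTheory Set

/-!
Write `F(y) = ∫_{-∞}^y (h - Ph) p`. Since `(h - Ph) p` is integrable and continuous at `x`,
the fundamental theorem of calculus gives `F'(x) = (h(x) - Ph) p(x)`, and the quotient rule
for `f = F / p` reads `f' = F' / p - (p' / p) f`, which is the Stein equation.
-/

theorem hasDerivAt_integral_Iic {E : Type*} [NormedAddCommGroup E] [NormedSpace ℝ E]
    [CompleteSpace E] {f : ℝ → E} (hf : Integrable f) {x : ℝ} (hx : ContinuousAt f x) :
    HasDerivAt (fun y => ∫ t in Iic y, f t) (f x) x := by
  have hsplit : (fun y => ∫ t in Iic y, f t) =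
      fun y => (∫ t in x..y, f t) + ∫ t in Iic x, f t := by
    funext y
    rw [← intervalIntegral.integral_Iic_sub_Iic hf.integrableOn hf.integrableOn, sub_add_cancel]
  rw [hsplit]
  exact (intervalIntegral.integral_hasDerivAt_right hf.intervalIntegrable
    hf.aestronglyMeasurable.stronglyMeasurableAtFilter hx).add_const _

theorem integrable_mul_of_integrable_abs_mul {α : Type*} [MeasurableSpace α] {μ : Measure α}
    {h p : α → ℝ} (hh : AEStronglyMeasurable h μ) (hp : AEStronglyMeasurable p μ)
    (hp_nonneg : ∀ t, 0 ≤ p t) (hint : Integrable (fun t => |h t| * p t) μ) :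
    Integrable (fun t => h t * p t) μ := by
  refine (integrable_norm_iff (hh.mul hp)).mp ?_
  simpa only [Pi.mul_apply, Real.norm_eq_abs, abs_mul, abs_of_nonneg (hp_nonneg _)] using hint

theorem HasDerivAt.div_logDeriv {F p : ℝ → ℝ} {F' p' x : ℝ}
    (hF : HasDerivAt F F' x) (hp : HasDerivAt p p' x) (hpx : p x ≠ 0) :
    HasDerivAt (fun y => F y / p y) (F' / p x - p' / p x * (F x / p x)) x :=
  (hF.div hp hpx).congr_deriv (by field_simp)

theorem stmt6_general (p p' : ℝ → ℝ) (hppos : ∀ x, 0 < p x)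
    (hprob : ∫ x : ℝ, p x = 1)
    (h : ℝ → ℝ) (hmeas : Measurable h)
    (hint : Integrable (fun t : ℝ => |h t| * p t))
    (x : ℝ) (hderiv : HasDerivAt p (p' x) x) (hcont : ContinuousAt h x) :
    ∃ d : ℝ,
      HasDerivAt
        (fun y : ℝ => (∫ t in Set.Iic y, (h t - ∫ s : ℝ, h s * p s) * p t) / p y) d x ∧
      d + (p' x / p x) * ((∫ t in Set.Iic x, (h t - ∫ s : ℝ, h s * p s) * p t) / p x)
        = h x - ∫ s : ℝ, h s * p s := by
  set Ph := ∫ s : ℝ, h s * p s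
  have hp_int : Integrable p := integrable_of_integral_eq_one hprob
  have hhp_int : Integrable (fun t => h t * p t) :=
    integrable_mul_of_integrable_abs_mul hmeas.aestronglyMeasurable hp_int.aestronglyMeasurable
      (fun t => (hppos t).le) hint
  have hg_int : Integrable (fun t => (h t - Ph) * p t) := by
    simpa only [sub_mul] using hhp_int.sub' (hp_int.const_mul Ph)
  have hF := hasDerivAt_integral_Iic hg_int ((hcont.sub continuousAt_const).mul hderiv.continuousAt)
  refine ⟨_, hF.div_logDeriv hderiv (hppos x).ne', ?_⟩
  field_simp [(hppos x).ne']
  ring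

/-- The function `f(x) = p(x)⁻¹ ∫_{-∞}^x (h(t) - Ph) p(t) dt` solves the Stein equation
`f'(x) + (p'(x)/p(x)) f(x) = h(x) - Ph` at every point where `p` is differentiable and
`h` is continuous. -/
theorem stmt6 (p p' : ℝ → ℝ) (hp : Continuous p) (hppos : ∀ x, 0 < p x)
    (hprob : ∫ x : ℝ, p x = 1)
    (h : ℝ → ℝ) (hmeas : Measurable h)
    (hint : Integrable (fun t : ℝ => |h t| * p t))
    (x : ℝ) (hderiv : HasDerivAt p (p' x) x) (hcont : ContinuousAt h x) :
    ∃ d : ℝ,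
      HasDerivAt
        (fun y : ℝ => (∫ t in Set.Iic y, (h t - ∫ s : ℝ, h s * p s) * p t) / p y) d x ∧
      d + (p' x / p x) * ((∫ t in Set.Iic x, (h t - ∫ s : ℝ, h s * p s) * p t) / p x)
        = h x - ∫ s : ℝ, h s * p s :=
  stmt6_general p p' hppos hprob h hmeas hint x hderiv hcont
end

section
/- For k ≥ 1, a_k > 0, p(x) = b_k exp(-a_k x^{2k}) with CDF P, and z ∈ ℝ, the solution f_z of the Stein equation satisfies lim_{x→∞} 2k a_k x^{2k-1} f_z(x) = P(z) and lim_{x→-∞} 2k a_k x^{2k-1} f_z(x) = P(z) - 1. -/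
/-!
Write `φ(t) = exp (-a t^n)` with `n = 2k`. By L'Hôpital, the Gaussian-type tail satisfies
`∫_x^∞ φ ~ φ(x) / (n a x^(n-1))` as `x → ∞`, because `φ(x) / (n a x^(n-1))` has derivative
`-φ(x) (1 + O(x^(-n)))`. For `x > z` the Stein solution is `P(z)` times `e^{a x^n} ∫_x^∞ φ`, which
gives the limit at `+∞`; for `x ≤ z` it is `1 - P(z)` times `e^{a x^n} ∫_{-∞}^x φ`, and the
evenness of `φ` turns this into the tail at `-x`, with a sign from the odd power `x^(n-1)`.
-/

open MeasureTheory Filter Set Topology Real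

section TailIntegral

variable {E : Type*} [NormedAddCommGroup E] [NormedSpace ℝ E]
  {f : ℝ → E} {c : ℝ}

theorem hasDerivAt_integral_Ioi [CompleteSpace E] (hf : Continuous f)
    (hfi : IntegrableOn f (Ioi c)) {x : ℝ} (hx : c < x) :
    HasDerivAt (fun y => ∫ t in Ioi y, f t) (-f x) x := by
  have htail : (fun y => ∫ t in Ioi y, f t) =ᶠ[𝓝 x]
      fun y => (∫ t in Ioi c, f t) - ∫ t in c..y, f t := by
    filter_upwards [eventually_gt_nhds hx] with y hy
    rw [← intervalIntegral.integral_Ioi_sub_Ioi hfi hy.le, sub_sub_cancel]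
  exact ((hf.integral_hasStrictDerivAt c x).hasDerivAt.const_sub _).congr_of_eventuallyEq htail

theorem tendsto_integral_Ioi_atTop (hfi : IntegrableOn f (Ioi c)) :
    Tendsto (fun y => ∫ t in Ioi y, f t) atTop (𝓝 0) := by
  have hlim := (tendsto_const_nhds (x := ∫ t in Ioi c, f t)).sub
    (intervalIntegral_tendsto_integral_Ioi c hfi tendsto_id)
  rw [sub_self] at hlim
  refine hlim.congr' ?_
  filter_upwards [eventually_ge_atTop c] with y hy
  rw [id, ← intervalIntegral.integral_Ioi_sub_Ioi hfi hy, sub_sub_cancel]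

end TailIntegral

theorem integrableOn_exp_neg_mul_pow_Ioi_zero {a : ℝ} (ha : 0 < a) {n : ℕ} (hn : n ≠ 0) :
    IntegrableOn (fun t => exp (-a * t ^ n)) (Ioi 0) := by
  simpa [rpow_natCast] using integrableOn_rpow_mul_exp_neg_mul_rpow (s := 0) neg_one_lt_zero
    (Nat.cast_pos.2 (Nat.pos_of_ne_zero hn)) ha

theorem integrable_exp_neg_mul_pow_of_even {a : ℝ} (ha : 0 < a) {n : ℕ} (hn : Even n)
    (hn0 : n ≠ 0) : Integrable fun t => exp (-a * t ^ n) := by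
  obtain ⟨k, rfl⟩ := hn
  rw [← two_mul] at hn0 ⊢
  refine ((integrable_exp_neg_mul_sq ha).const_mul (exp a)).mono'
    (by fun_prop) (Eventually.of_forall fun t => ?_)
  have hpow : t ^ 2 - 1 ≤ t ^ (2 * k) := by
    rw [pow_mul]
    rcases le_or_gt (t ^ 2) 1 with h | h
    · linarith [pow_nonneg (sq_nonneg t) k]
    · linarith [le_self_pow₀ h.le (right_ne_zero_of_mul hn0)]
  rw [norm_of_nonneg (exp_pos _).le, ← exp_add, exp_le_exp]
  nlinarith

theorem hasDerivAt_exp_neg_mul_pow_div (m : ℕ) {a x : ℝ} (ha : a ≠ 0) (hx : x ≠ 0) :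
    HasDerivAt (fun y => exp (-a * y ^ (m + 1)) / ((m + 1) * a * y ^ m))
      (-exp (-a * x ^ (m + 1)) * (1 + m / ((m + 1) * a * x ^ (m + 1)))) x := by
  have hnum := ((hasDerivAt_pow (m + 1) x).const_mul (-a)).exp
  have hden := (hasDerivAt_pow m x).const_mul ((m + 1) * a)
  refine (hnum.div hden (by positivity)).congr_deriv ?_
  rcases m with _ | m
  · simp only [zero_add, pow_one, pow_zero, Nat.cast_zero, Nat.cast_one, tsub_self, zero_mul,
      mul_zero, mul_one, sub_zero, zero_div, add_zero]
    field_simp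
  · simp only [Nat.add_sub_cancel]
    push_cast
    field_simp
    ring

theorem tendsto_exp_neg_mul_pow_div_atTop {a : ℝ} (ha : 0 < a) (m : ℕ) :
    Tendsto (fun x => exp (-a * x ^ (m + 1)) / ((m + 1) * a * x ^ m)) atTop (𝓝 0) := by
  have hexp : Tendsto (fun x : ℝ => exp (-a * x ^ (m + 1))) atTop (𝓝 0) :=
    tendsto_exp_atBot.comp
      ((tendsto_pow_atTop (Nat.succ_ne_zero m)).const_mul_atTop_of_neg (neg_lt_zero.2 ha))
  have hbound := hexp.div_const ((m + 1) * a)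
  rw [zero_div] at hbound
  refine tendsto_of_tendsto_of_tendsto_of_le_of_le' tendsto_const_nhds hbound ?_ ?_
  · filter_upwards [eventually_gt_atTop 0] with x hx
    positivity
  · filter_upwards [eventually_ge_atTop 1] with x hx
    exact div_le_div_of_nonneg_left (exp_pos _).le (by positivity)
      (le_mul_of_one_le_right (by positivity) (one_le_pow₀ hx))

theorem tendsto_mul_exp_mul_integral_Ioi_exp_neg_mul_pow {a : ℝ} (ha : 0 < a) {n : ℕ}
    (hn : n ≠ 0) :
    Tendsto (fun x => n * a * x ^ (n - 1) * exp (a * x ^ n) * ∫ t in Ioi x, exp (-a * t ^ n))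
      atTop (𝓝 1) := by
  obtain ⟨m, rfl⟩ := Nat.exists_eq_add_one.2 (Nat.pos_of_ne_zero hn)
  set F := fun x : ℝ => ∫ t in Ioi x, exp (-a * t ^ (m + 1))
  set G := fun x : ℝ => exp (-a * x ^ (m + 1)) / ((m + 1) * a * x ^ m)
  have hint := integrableOn_exp_neg_mul_pow_Ioi_zero ha (Nat.succ_ne_zero m)
  have hcorr : Tendsto (fun x : ℝ => (m : ℝ) / ((m + 1) * a * x ^ (m + 1))) atTop (𝓝 0) :=
    tendsto_const_nhds.div_atTop
      ((tendsto_pow_atTop (Nat.succ_ne_zero m)).const_mul_atTop (by positivity))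
  have hratio : Tendsto (fun x => F x / G x) atTop (𝓝 1) := by
    refine HasDerivAt.lhopital_zero_atTop (f' := fun x => -exp (-a * x ^ (m + 1)))
      (g' := fun x => -exp (-a * x ^ (m + 1)) * (1 + m / ((m + 1) * a * x ^ (m + 1))))
      ?_ ?_ ?_ (tendsto_integral_Ioi_atTop hint) (tendsto_exp_neg_mul_pow_div_atTop ha m) ?_
    · filter_upwards [eventually_gt_atTop 0] with x hx
      exact hasDerivAt_integral_Ioi (by fun_prop) hint hx
    · filter_upwards [eventually_gt_atTop 0] with x hx
      exact hasDerivAt_exp_neg_mul_pow_div m ha.ne' hx.ne'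
    · filter_upwards [eventually_gt_atTop 0] with x hx
      exact mul_ne_zero (neg_ne_zero.2 (exp_ne_zero _)) (by positivity)
    · have hlim := (tendsto_const_nhds.add hcorr).inv₀ (by norm_num : (1 : ℝ) + 0 ≠ 0)
      rw [add_zero, inv_one] at hlim
      refine hlim.congr' ?_
      filter_upwards [eventually_gt_atTop 0] with x hx
      rw [div_mul_cancel_left₀ (neg_ne_zero.2 (exp_ne_zero _))]
  refine hratio.congr' ?_
  filter_upwards [eventually_gt_atTop 0] with x hx
  simp only [F, G]
  rw [neg_mul, exp_neg]
  push_cast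
  field_simp

theorem tendsto_mul_exp_mul_integral_Iic_exp_neg_mul_pow {a : ℝ} (ha : 0 < a) {n : ℕ}
    (hn : Even n) (hn0 : n ≠ 0) :
    Tendsto (fun x => n * a * x ^ (n - 1) * exp (a * x ^ n) * ∫ t in Iic x, exp (-a * t ^ n))
      atBot (𝓝 (-1)) := by
  have hodd : Odd (n - 1) := Nat.Even.sub_odd (Nat.one_le_iff_ne_zero.2 hn0) hn odd_one
  refine ((tendsto_mul_exp_mul_integral_Ioi_exp_neg_mul_pow ha hn0).comp
    tendsto_neg_atBot_atTop).neg.congr fun x => ?_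
  rw [Function.comp_apply, ← integral_comp_neg_Iic, hodd.neg_pow]
  simp only [hn.neg_pow]
  ring

/-- For `p(x) = b exp(-a x^{2k})` with CDF `P`, the Stein solution `f_z` satisfies
`lim_{x→∞} 2k a x^{2k-1} f_z(x) = P(z)` and `lim_{x→-∞} 2k a x^{2k-1} f_z(x) = P(z) - 1`. -/
theorem stmt9 (k : ℕ) (hk : 1 ≤ k) (a b : ℝ) (ha : 0 < a)
    (hb : b = (∫ t : ℝ, Real.exp (-a * t ^ (2 * k)))⁻¹)
    (P : ℝ → ℝ) (hP : P = fun y => ∫ t in Set.Iic y, b * Real.exp (-a * t ^ (2 * k)))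
    (z : ℝ) (f : ℝ → ℝ)
    (hf : f = fun x =>
      if x ≤ z then (1 - P z) * P x * Real.exp (a * x ^ (2 * k)) / b
      else P z * (1 - P x) * Real.exp (a * x ^ (2 * k)) / b) :
    Tendsto (fun x : ℝ => 2 * k * a * x ^ (2 * k - 1) * f x) atTop (nhds (P z))
    ∧ Tendsto (fun x : ℝ => 2 * k * a * x ^ (2 * k - 1) * f x) atBot (nhds (P z - 1)) := by
  have hn0 : 2 * k ≠ 0 := by omega
  have hint := integrable_exp_neg_mul_pow_of_even ha (even_two_mul k) hn0
  have hbI : b * ∫ t, exp (-a * t ^ (2 * k)) = 1 :=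
    hb ▸ inv_mul_cancel₀ (integral_exp_pos hint).ne'
  have hb0 : b ≠ 0 := left_ne_zero_of_mul_eq_one hbI
  have hcdf (x : ℝ) : P x = b * ∫ t in Iic x, exp (-a * t ^ (2 * k)) := by
    rw [hP]
    exact integral_const_mul _ _
  have hsurv (x : ℝ) : 1 - P x = b * ∫ t in Ioi x, exp (-a * t ^ (2 * k)) := by
    rw [hcdf, ← hbI,
      ← intervalIntegral.integral_Iic_add_Ioi hint.integrableOn hint.integrableOn]
    ring
  subst hf
  constructor
  · have hlim := (tendsto_mul_exp_mul_integral_Ioi_exp_neg_mul_pow ha hn0).const_mul (P z)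
    rw [mul_one] at hlim
    refine hlim.congr' ?_
    filter_upwards [eventually_gt_atTop z] with x hx
    rw [if_neg (not_le.2 hx), hsurv]
    push_cast
    field_simp
  · have hlim := (tendsto_mul_exp_mul_integral_Iic_exp_neg_mul_pow ha (even_two_mul k)
      hn0).const_mul (1 - P z)
    rw [mul_neg_one, neg_sub] at hlim
    refine hlim.congr' ?_
    filter_upwards [eventually_le_atBot z] with x hx
    rw [if_pos hx, hcdf x]
    push_cast
    field_simp
end

section
/- Let ρ be the measure ρ_a = a δ_0 + ((1-a)/2)(δ_{-1} + δ_1) on ℝ for 0 ≤ a ≤ 2/3, with cumulant generating function φ(s) = log ∫ e^{sx} dρ_a(x) = log(a + (1-a) cosh s). Then φ'''(s) ≤ 0 for all s ≥ 0. -/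
/-!
Writing `b = 1 - a` and `f = a + b cosh`, the identity `cosh² - sinh² = 1` collapses the
derivatives of `log f` to `φ'' = b (a cosh + b) / f²` and
`φ''' = b sinh · (a² - a b cosh - 2 b²) / f³`. For `s ≥ 0` we have `sinh s ≥ 0` and
`cosh s ≥ 1`, so the bracket is at most `a² - a b - 2 b² = (a - 2b)(a + b) = 3a - 2 ≤ 0`.
-/

open Real

/-- `log (a + b cosh t)` is the cumulant generating function of `a δ₀ + (b/2)(δ₋₁ + δ₁)`. -/
noncomputable def threePointCGF (a b t : ℝ) : ℝ := log (a + b * cosh t)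

section

variable {a b : ℝ}

lemma add_mul_cosh_pos (hb : 0 ≤ b) (hab : 0 < a + b) (t : ℝ) : 0 < a + b * cosh t := by
  nlinarith [one_le_cosh t]

lemma hasDerivAt_add_mul_cosh (t : ℝ) :
    HasDerivAt (fun t => a + b * cosh t) (b * sinh t) t :=
  ((hasDerivAt_cosh t).const_mul b).const_add a

lemma deriv_threePointCGF (hb : 0 ≤ b) (hab : 0 < a + b) :
    deriv (threePointCGF a b) = fun t => b * sinh t / (a + b * cosh t) :=
  funext fun t => (hasDerivAt_add_mul_cosh t).log (add_mul_cosh_pos hb hab t).ne' |>.deriv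

lemma deriv_sinh_div_add_mul_cosh (hb : 0 ≤ b) (hab : 0 < a + b) :
    deriv (fun t => b * sinh t / (a + b * cosh t)) =
      fun t => b * (a * cosh t + b) / (a + b * cosh t) ^ 2 := by
  funext t
  refine (((hasDerivAt_sinh t).const_mul b).div (hasDerivAt_add_mul_cosh t)
    (add_mul_cosh_pos hb hab t).ne').congr_deriv ?_ |>.deriv
  congr 1
  linear_combination b ^ 2 * cosh_sq t

lemma deriv_cosh_div_add_mul_cosh_sq (hb : 0 ≤ b) (hab : 0 < a + b) (t : ℝ) :
    deriv (fun t => b * (a * cosh t + b) / (a + b * cosh t) ^ 2) t =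
      b * sinh t * (a ^ 2 - a * b * cosh t - 2 * b ^ 2) / (a + b * cosh t) ^ 3 := by
  have hf := (add_mul_cosh_pos hb hab t).ne'
  refine ((((hasDerivAt_cosh t).const_mul a).add_const b).const_mul b).div
    ((hasDerivAt_add_mul_cosh t).fun_pow 2) (pow_ne_zero 2 hf) |>.congr_deriv ?_ |>.deriv
  field_simp
  ring

lemma iteratedDeriv_three_threePointCGF (hb : 0 ≤ b) (hab : 0 < a + b) (t : ℝ) :
    iteratedDeriv 3 (threePointCGF a b) t =
      b * sinh t * (a ^ 2 - a * b * cosh t - 2 * b ^ 2) / (a + b * cosh t) ^ 3 := by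
  rw [iteratedDeriv_succ, iteratedDeriv_succ, iteratedDeriv_one, deriv_threePointCGF hb hab,
    deriv_sinh_div_add_mul_cosh hb hab, deriv_cosh_div_add_mul_cosh_sq hb hab]

lemma iteratedDeriv_three_threePointCGF_nonpos (ha : 0 ≤ a) (hb : 0 < b) (hab : a ≤ 2 * b)
    {s : ℝ} (hs : 0 ≤ s) : iteratedDeriv 3 (threePointCGF a b) s ≤ 0 := by
  rw [iteratedDeriv_three_threePointCGF hb.le (by linarith)]
  have hsinh : 0 ≤ sinh s := sinh_nonneg_iff.mpr hs
  have hbracket : a ^ 2 - a * b * cosh s - 2 * b ^ 2 ≤ 0 :=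
    calc a ^ 2 - a * b * cosh s - 2 * b ^ 2
        ≤ a ^ 2 - a * b - 2 * b ^ 2 := by
          nlinarith [mul_nonneg (mul_nonneg ha hb.le) (sub_nonneg.mpr (one_le_cosh s))]
      _ = (a - 2 * b) * (a + b) := by ring
      _ ≤ 0 := mul_nonpos_of_nonpos_of_nonneg (by linarith) (by linarith)
  exact div_nonpos_of_nonpos_of_nonneg
    (mul_nonpos_of_nonneg_of_nonpos (mul_nonneg hb.le hsinh) hbracket)
    (pow_nonneg (add_mul_cosh_pos hb.le (by linarith) s).le 3)

end

/-- GHS inequality for the three-point measure `ρ_a = a δ₀ + ((1-a)/2)(δ_{-1} + δ_1)`,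
`0 ≤ a ≤ 2/3`: the cumulant generating function `φ(s) = log(a + (1-a) cosh s)` has
nonpositive third derivative on `[0,∞)`. -/
theorem stmt13 (a : ℝ) (ha0 : 0 ≤ a) (ha1 : a ≤ 2 / 3) (s : ℝ) (hs : 0 ≤ s) :
    iteratedDeriv 3 (fun t : ℝ => Real.log (a + (1 - a) * Real.cosh t)) s ≤ 0 :=
  iteratedDeriv_three_threePointCGF_nonpos ha0 (by linarith) (by linarith) hs
end

section
/- Let ρ = (2/3) δ_0 + (1/6) δ_{-√3} + (1/6) δ_{√3} and φ(s) = log ∫ e^{sx} dρ(x). Then φ'''(s) = -6 sinh(√3 s) √3 (cosh(√3 s) - 1) / (12 cosh(√3 s) + 6 cosh(√3 s)² + cosh(√3 s)³ + 8), and in particular φ'''(s) ≤ 0 for all s ≥ 0. -/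
/-!
For `ρ_a = (2/3)δ₀ + (1/6)δ_{-a} + (1/6)δ_a` the cumulant generating function is
`φ(t) = log((2 + cosh(a t))/3)`. Writing `c = cosh(a t)` and using `cosh² - sinh² = 1`,
one finds `φ' = a sinh / (2 + c)`, `φ'' = a² (2c + 1) / (2 + c)²` and
`φ''' = -2 a³ sinh (c - 1) / (2 + c)³`; every factor other than `sinh(a t)` has a fixed sign,
so `φ''' ≤ 0` for `a t ≥ 0`. The theorem is the case `a = √3`, where `(2 + c)³` is expanded.
-/

open Real

namespace ThreePointCGF

variable (a : ℝ)

lemma two_add_cosh_pos (x : ℝ) : 0 < 2 + cosh x := by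
  linarith [cosh_pos x]

lemma hasDerivAt_cosh_mul (t : ℝ) :
    HasDerivAt (fun t => cosh (a * t)) (sinh (a * t) * a) t := by
  simpa using ((hasDerivAt_id t).const_mul a).cosh

lemma hasDerivAt_sinh_mul (t : ℝ) :
    HasDerivAt (fun t => sinh (a * t)) (cosh (a * t) * a) t := by
  simpa using ((hasDerivAt_id t).const_mul a).sinh

lemma hasDerivAt_log_two_add_cosh_div_three (t : ℝ) :
    HasDerivAt (fun t => log ((2 + cosh (a * t)) / 3))
      (a * sinh (a * t) / (2 + cosh (a * t))) t := by
  have hpos := two_add_cosh_pos (a * t)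
  refine (((hasDerivAt_cosh_mul a t).const_add 2).div_const 3).log (by positivity)
    |>.congr_deriv ?_
  field_simp

lemma hasDerivAt_sinh_div_two_add_cosh (t : ℝ) :
    HasDerivAt (fun t => a * sinh (a * t) / (2 + cosh (a * t)))
      (a ^ 2 * (2 * cosh (a * t) + 1) / (2 + cosh (a * t)) ^ 2) t := by
  have hpos := two_add_cosh_pos (a * t)
  refine (((hasDerivAt_sinh_mul a t).const_mul a).div ((hasDerivAt_cosh_mul a t).const_add 2)
    hpos.ne').congr_deriv ?_
  field_simp
  linear_combination a ^ 2 * cosh_sq_sub_sinh_sq (a * t)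

lemma hasDerivAt_cosh_div_two_add_cosh_sq (t : ℝ) :
    HasDerivAt (fun t => a ^ 2 * (2 * cosh (a * t) + 1) / (2 + cosh (a * t)) ^ 2)
      (-2 * a ^ 3 * sinh (a * t) * (cosh (a * t) - 1) / (2 + cosh (a * t)) ^ 3) t := by
  have hpos := two_add_cosh_pos (a * t)
  refine ((((hasDerivAt_cosh_mul a t).const_mul 2).add_const 1).const_mul (a ^ 2) |>.div
    (((hasDerivAt_cosh_mul a t).const_add 2).fun_pow 2) (by positivity)).congr_deriv ?_
  field_simp
  ring

lemma iteratedDeriv_three_log_two_add_cosh_div_three (t : ℝ) :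
    iteratedDeriv 3 (fun t => log ((2 + cosh (a * t)) / 3)) t
      = -2 * a ^ 3 * sinh (a * t) * (cosh (a * t) - 1) / (2 + cosh (a * t)) ^ 3 := by
  have h1 := funext fun t => (hasDerivAt_log_two_add_cosh_div_three a t).deriv
  have h2 := funext fun t => (hasDerivAt_sinh_div_two_add_cosh a t).deriv
  rw [iteratedDeriv_succ, iteratedDeriv_succ, iteratedDeriv_one, h1, h2]
  exact (hasDerivAt_cosh_div_two_add_cosh_sq a t).deriv

lemma iteratedDeriv_three_log_two_add_cosh_div_three_nonpos (ha : 0 ≤ a) {t : ℝ} (ht : 0 ≤ t) :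
    iteratedDeriv 3 (fun t => log ((2 + cosh (a * t)) / 3)) t ≤ 0 := by
  rw [iteratedDeriv_three_log_two_add_cosh_div_three]
  have hsinh : 0 ≤ sinh (a * t) := sinh_nonneg_iff.2 (mul_nonneg ha ht)
  have hcosh : 0 ≤ cosh (a * t) - 1 := sub_nonneg.2 (one_le_cosh _)
  have hpos := two_add_cosh_pos (a * t)
  refine div_nonpos_of_nonpos_of_nonneg ?_ (by positivity)
  have := mul_nonneg (mul_nonneg (pow_nonneg ha 3) hsinh) hcosh
  linarith

end ThreePointCGF

open ThreePointCGF in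
/-- For `ρ = (2/3)δ₀ + (1/6)δ_{-√3} + (1/6)δ_{√3}`, the cumulant generating function
`φ(s) = log((2 + cosh(√3 s))/3)` has third derivative
`-6 sinh(√3 s) √3 (cosh(√3 s) - 1) / (12 cosh(√3 s) + 6 cosh(√3 s)² + cosh(√3 s)³ + 8)`,
which is nonpositive for `s ≥ 0`. -/
theorem stmt14 :
    (∀ s : ℝ,
      iteratedDeriv 3 (fun t : ℝ => Real.log ((2 + Real.cosh (Real.sqrt 3 * t)) / 3)) s
        = -6 * Real.sinh (Real.sqrt 3 * s) * Real.sqrt 3 * (Real.cosh (Real.sqrt 3 * s) - 1)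
          / (12 * Real.cosh (Real.sqrt 3 * s) + 6 * Real.cosh (Real.sqrt 3 * s) ^ 2
            + Real.cosh (Real.sqrt 3 * s) ^ 3 + 8))
    ∧ ∀ s : ℝ, 0 ≤ s →
        iteratedDeriv 3 (fun t : ℝ => Real.log ((2 + Real.cosh (Real.sqrt 3 * t)) / 3)) s
          ≤ 0 := by
  refine ⟨fun s => ?_, fun s hs =>
    iteratedDeriv_three_log_two_add_cosh_div_three_nonpos _ (sqrt_nonneg 3) hs⟩
  have hcube : √3 ^ 3 = 3 * √3 := by
    rw [pow_succ, sq_sqrt (by norm_num : (0 : ℝ) ≤ 3)]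
  rw [iteratedDeriv_three_log_two_add_cosh_div_three, hcube]
  ring
end
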